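/- The operators U₁(θ) form a π-periodic one-parameter unitary group: for all θ, θ' ∈ ℝ, U₁(θ) is a unitary operator on H, U₁(0) = 1, U₁(θ) ∘ U₁(θ') = U₁(θ + θ'), and U₁(θ + π) = U₁(θ). -/

import Mathlib

open Complex

noncomputable section

/-- The Hilbert space `H := ℓ²(ℤ, ℂ)`. -/
abbrev H : Type := lp (fun _ : ℤ => ℂ) 2

/-- The orthonormal basis vectors `e ℓ = lp.single 2 ℓ 1`. -/
def e (ℓ : ℤ) : H := lp.single 2 ℓ 1

/-- `U₁(θ) := exp(−iθ/2) • (cos(θ/2) • U(θ) + (i·sin(θ/2)) • U(θ+π))`. -/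
def U₁ (U : ℝ → (H →L[ℂ] H)) (θ : ℝ) : H →L[ℂ] H :=
  Complex.exp (-Complex.I * θ / 2) •
    ((Real.cos (θ / 2) : ℂ) • U θ + (Complex.I * Real.sin (θ / 2)) • U (θ + Real.pi))

/-! `U₁(θ)` is diagonal in the basis `e ℓ`. Since `U(θ + π) e ℓ = (-1)^ℓ U(θ) e ℓ`, its eigenvalue is
`e^{-iθ/2} (cos(θ/2) ± i sin(θ/2)) e^{iℓθ}`, and `cos(θ/2) ± i sin(θ/2) = e^{± iθ/2}`; so the eigenvalue
is `e^{iℓθ}` for even `ℓ` and `e^{i(ℓ-1)θ}` for odd `ℓ`, i.e. `e^{i nθ}` with `n = 2⌊ℓ/2⌋` even.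
A family of operators that is diagonal in a Hilbert basis with eigenvalues `e^{i n θ}` is a
one-parameter unitary group, and it is `π`-periodic when every frequency `n` is even. -/

open ComplexConjugate

namespace HilbertBasis

variable {ι 𝕜 E : Type*} [RCLike 𝕜] [NormedAddCommGroup E] [InnerProductSpace 𝕜 E]
  (b : HilbertBasis ι 𝕜 E)

theorem ext_continuousLinearMap {F : Type*} [TopologicalSpace F] [AddCommGroup F] [Module 𝕜 F]
    [T2Space F] {f g : E →L[𝕜] F} (h : ∀ i, f (b i) = g (b i)) : f = g :=
  ContinuousLinearMap.ext_on (Submodule.dense_iff_topologicalClosure_eq_top.2 b.dense_span)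
    (by rintro _ ⟨i, rfl⟩; exact h i)

theorem ext_inner {x y : E} (h : ∀ i, inner 𝕜 (b i) x = inner 𝕜 (b i) y) : x = y :=
  b.repr.injective <| lp.ext <| funext fun i => by simp only [b.repr_apply_apply, h]

theorem adjoint_apply_of_apply_eq_smul [CompleteSpace E] {T : E →L[𝕜] E} {c : ι → 𝕜}
    (hT : ∀ i, T (b i) = c i • b i) (i : ι) :
    T.adjoint (b i) = conj (c i) • b i := by
  refine b.ext_inner fun j => ?_
  rw [ContinuousLinearMap.adjoint_inner_right, hT, inner_smul_left, inner_smul_right]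
  obtain rfl | hji := eq_or_ne j i
  · rfl
  · simp [b.orthonormal.2 hji]

end HilbertBasis

variable {ι E : Type*} [NormedAddCommGroup E] [InnerProductSpace ℂ E]

def IsDiagonalExpFamily (b : HilbertBasis ι ℂ E) (n : ι → ℝ) (W : ℝ → E →L[ℂ] E) : Prop :=
  ∀ θ i, W θ (b i) = exp (I * n i * θ) • b i

namespace IsDiagonalExpFamily

variable {b : HilbertBasis ι ℂ E} {n : ι → ℝ} {W : ℝ → E →L[ℂ] E}

theorem map_add (hW : IsDiagonalExpFamily b n W) (θ θ' : ℝ) : W (θ + θ') = W θ ∘L W θ' :=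
  b.ext_continuousLinearMap fun i => by
    rw [ContinuousLinearMap.comp_apply, hW, hW, map_smul, hW, smul_smul, ← exp_add]
    push_cast; ring_nf

theorem map_zero (hW : IsDiagonalExpFamily b n W) : W 0 = 1 :=
  b.ext_continuousLinearMap fun i => by simp [hW 0 i]

theorem star_eq [CompleteSpace E] (hW : IsDiagonalExpFamily b n W) (θ : ℝ) :
    star (W θ) = W (-θ) :=
  b.ext_continuousLinearMap fun i => by
    rw [ContinuousLinearMap.star_eq_adjoint, b.adjoint_apply_of_apply_eq_smul (hW θ), hW,
      ← exp_conj]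
    simp only [map_mul, conj_I, conj_ofReal]
    push_cast; ring_nf

theorem mem_unitary [CompleteSpace E] (hW : IsDiagonalExpFamily b n W) (θ : ℝ) :
    W θ ∈ unitary (E →L[ℂ] E) := by
  rw [Unitary.mem_iff, hW.star_eq]
  constructor
  · rw [ContinuousLinearMap.mul_def, ← hW.map_add, neg_add_cancel, hW.map_zero]
  · rw [ContinuousLinearMap.mul_def, ← hW.map_add, add_neg_cancel, hW.map_zero]

theorem periodic (hW : IsDiagonalExpFamily b n W) (hn : ∀ i, ∃ k : ℤ, n i = 2 * k) :
    Function.Periodic W Real.pi := fun θ =>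
  b.ext_continuousLinearMap fun i => by
    obtain ⟨k, hk⟩ := hn i
    rw [hW, hW, ← mul_one (exp (I * n i * θ)), ← exp_int_mul_two_pi_mul_I k, ← exp_add, hk]
    push_cast; ring_nf

end IsDiagonalExpFamily

theorem U₁_eigenvalue_eq (θ : ℝ) (ℓ : ℤ) :
    exp (-I * θ / 2) * (Real.cos (θ / 2) * exp (I * ℓ * θ)
      + I * Real.sin (θ / 2) * exp (I * ℓ * (θ + Real.pi))) =
      exp (I * (2 * (ℓ / 2) : ℤ) * θ) := by
  have hshift : exp (I * ℓ * (θ + Real.pi)) = (-1) ^ ℓ * exp (I * ℓ * θ) := by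
    rw [← exp_pi_mul_I, ← exp_int_mul, ← exp_add]
    ring_nf
  have hplus : exp (-I * θ / 2) * (Real.cos (θ / 2) + I * Real.sin (θ / 2)) = 1 := by
    rw [ofReal_cos, ofReal_sin, mul_comm I, cos_add_sin_I, ← exp_add, ← exp_zero]
    push_cast; ring_nf
  have hminus : exp (-I * θ / 2) * (Real.cos (θ / 2) - I * Real.sin (θ / 2)) * exp (I * θ) = 1 := by
    rw [ofReal_cos, ofReal_sin, mul_comm I, cos_sub_sin_I, ← exp_add, ← exp_add, ← exp_zero]
    push_cast; ring_nf
  obtain ⟨k, rfl | rfl⟩ := Int.even_or_odd' ℓ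
  · rw [hshift, show 2 * k / 2 = k by omega, (even_two_mul k).neg_one_zpow]
    linear_combination exp (I * (2 * k : ℤ) * θ) * hplus
  · have hodd : exp (I * (2 * k + 1 : ℤ) * θ) = exp (I * (2 * k : ℤ) * θ) * exp (I * θ) := by
      rw [← exp_add]; push_cast; ring_nf
    rw [hshift, show (2 * k + 1) / 2 = k by omega, (odd_two_mul_add_one k).neg_one_zpow, hodd]
    linear_combination exp (I * (2 * k : ℤ) * θ) * hminus

theorem default_hilbertBasis_apply (ℓ : ℤ) : (default : HilbertBasis ℤ ℂ H) ℓ = e ℓ := by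
  rw [← HilbertBasis.repr_symm_single]
  rfl

theorem U₁_isDiagonalExpFamily {U : ℝ → (H →L[ℂ] H)}
    (hU : ∀ (θ : ℝ) (ℓ : ℤ), U θ (e ℓ) = Complex.exp (Complex.I * ℓ * θ) • e ℓ) :
    IsDiagonalExpFamily default (fun ℓ => ((2 * (ℓ / 2) : ℤ) : ℝ)) (U₁ U) := fun θ ℓ => by
  simp only [default_hilbertBasis_apply, U₁, smul_apply, add_apply, hU, smul_smul, ← add_smul,
    ofReal_intCast]
  rw [← U₁_eigenvalue_eq]
  push_cast
  ring_nf

theorem U₁_one_parameter_unitary_group_general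
    (U : ℝ → (H →L[ℂ] H))
    (hU : ∀ (θ : ℝ) (ℓ : ℤ), U θ (e ℓ) = Complex.exp (Complex.I * ℓ * θ) • e ℓ) :
    ∀ θ θ' : ℝ,
      U₁ U θ ∈ unitary (H →L[ℂ] H) ∧
      U₁ U 0 = 1 ∧
      U₁ U θ ∘L U₁ U θ' = U₁ U (θ + θ') ∧
      U₁ U (θ + Real.pi) = U₁ U θ := by
  have hW := U₁_isDiagonalExpFamily hU
  intro θ θ'
  exact ⟨hW.mem_unitary θ, hW.map_zero, (hW.map_add θ θ').symm,
    hW.periodic (fun ℓ => ⟨ℓ / 2, by push_cast; rfl⟩) θ⟩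

/-- **`U₁` is a π-periodic one-parameter unitary group:** each `U₁(θ)` is unitary,
`U₁(0) = 1`, `U₁(θ) ∘ U₁(θ') = U₁(θ + θ')`, and `U₁(θ + π) = U₁(θ)`. -/
theorem U₁_one_parameter_unitary_group
    (U : ℝ → (H →L[ℂ] H)) (V : unitary (H →L[ℂ] H))
    (hU : ∀ (θ : ℝ) (ℓ : ℤ), U θ (e ℓ) = Complex.exp (Complex.I * ℓ * θ) • e ℓ)
    (hV : ∀ ℓ : ℤ, (V : H →L[ℂ] H) (e ℓ) = e (ℓ + 1)) :
    ∀ θ θ' : ℝ,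
      U₁ U θ ∈ unitary (H →L[ℂ] H) ∧
      U₁ U 0 = 1 ∧
      U₁ U θ ∘L U₁ U θ' = U₁ U (θ + θ') ∧
      U₁ U (θ + Real.pi) = U₁ U θ :=
  U₁_one_parameter_unitary_group_general U hU
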